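/- Let X̃ be the hereditary closure of a subshift X, ν a non-atomic ergodic S-invariant measure on X with D_ν = D, and κ = ν ∗ B_{q,1−q} ergodic on X̃ for some 0 < q < 1. Let φ̃: X̃ → ℝ be continuous with D^{φ̃}_κ = D^{φ̃}. If (i) P(X̃, φ̃) ≤ (Var φ̃([0]) − log₂(1−q) − Var φ̃([1]))·d + d^{φ̃} − Var φ̃([0]), (ii) sup φ̃([1]) ≥ sup φ̃([0]), and (iii) Var φ̃([1]) ≤ Var φ̃([0]) − log₂(1−q), then κ is not a Gibbs measure for φ̃. -/

import Mathlib

/-!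
Only the lower Gibbs bound is used. Let `s_b`, `i_b = s_b - V_b` be the supremum and infimum of
`φ` on `X̃ ∩ [b]` and `Δ = (i₁ - i₀) - log₂ (1 - q)`. Counting ones in Birkhoff sums gives
`d ≤ D` and, by (ii), `d^φ ≤ s₀ + (s₁ - s₀) D`; so (i) and (iii) yield `P ≤ i₀ + D Δ`.

If `Δ < 0` then `P ≤ i₀`, and the Gibbs bound keeps `κ` of the all-zero words of every length
above a constant. So `κ` has an atom at the fixed point `0`, ergodicity puts all of `κ` there, and
then `ν [1] = 0`, i.e. `ν` is the point mass at `0`.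

If `Δ ≥ 0`, take a `ν`-positive word `W` of length `n` with the maximal number `#₁W ≥ n D` of
ones. Under `κ = ν ∗ B` such a word only arises from `x = W` with all its ones kept, so
`κ [W] ≤ ν [W] (1 - q) ^ #₁W`, and the Gibbs bound gives `ν [W] ≥ c⁻¹` for every `n`. Compactness
and Poincaré recurrence turn uniformly heavy cylinders into an atom at a periodic point,
contradicting that `ν` is non-atomic.
-/

open Filter MeasureTheory

abbrev FullShift : Type := ℤ → Fin 2

def shift (x : FullShift) : FullShift := fun i => x (i + 1)

def cylinder {n : ℕ} (W : Fin n → Fin 2) : Set FullShift :=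
  {x | ∀ i : Fin n, x ((i : ℕ) : ℤ) = W i}

def ones {n : ℕ} (W : Fin n → Fin 2) : ℕ := (Finset.univ.filter fun i => W i = 1).card

def zeros {n : ℕ} (W : Fin n → Fin 2) : ℕ := (Finset.univ.filter fun i => W i = 0).card

noncomputable def birkhoff (φ : FullShift → ℝ) (n : ℕ) (x : FullShift) : ℝ :=
  ∑ i ∈ Finset.range n, φ (shift^[i] x)

def wordAt (x : FullShift) (n : ℕ) : Fin n → Fin 2 := fun i => x ((i : ℕ) : ℤ)

def hereditaryClosure (X : Set FullShift) : Set FullShift :=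
  {y | ∃ x ∈ X, ∀ i : ℤ, y i ≤ x i}

def Qmul (p : FullShift × FullShift) : FullShift := fun i => p.1 i * p.2 i

-- The partition function Z_n(X,φ) = Σ_{W ∈ L_n(X)} 2^{sup_{x∈W∩X} Birkhoff sum}.
open Classical in
noncomputable def Zn (X : Set FullShift) (φ : FullShift → ℝ) (n : ℕ) : ℝ :=
  ∑ W ∈ Finset.univ.filter (fun W : Fin n → Fin 2 => (X ∩ cylinder W).Nonempty),
    (2 : ℝ) ^ (sSup ((birkhoff φ n) '' (X ∩ cylinder W)))

/-- κ is a Gibbs measure for φ (with pressure constant P) on the subshift Y. -/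
def IsGibbs (Y : Set FullShift) (κ : Measure FullShift) (φ : FullShift → ℝ) (P : ℝ) : Prop :=
  ∃ c : ℝ, 0 < c ∧ ∀ (n : ℕ) (x : FullShift), x ∈ Y → 0 < κ (cylinder (wordAt x n)) →
    c⁻¹ ≤ (κ (cylinder (wordAt x n))).toReal / (2 : ℝ) ^ (birkhoff φ n x - n * P) ∧
      (κ (cylinder (wordAt x n))).toReal / (2 : ℝ) ^ (birkhoff φ n x - n * P) ≤ c

open Set Topology Function
open scoped ENNReal

lemma Fin.two_mul_le_left (a b : Fin 2) : a * b ≤ a := by revert a b; decide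

lemma Fin.two_mul_le_right (a b : Fin 2) : a * b ≤ b := by revert a b; decide

lemma Fin.eq_zero_of_ne_one (i : Fin 2) (hi : i ≠ 1) : i = 0 := by omega

lemma measurable_shift : Measurable shift :=
  measurable_pi_lambda _ fun i => measurable_pi_apply (i + 1)

lemma shift_iterate_apply (k : ℕ) (x : FullShift) (j : ℤ) : (shift^[k] x) j = x (j + k) := by
  induction k generalizing x j with
  | zero => simp
  | succ k ih =>
    rw [iterate_succ_apply, ih, shift]
    push_cast
    ring_nf

lemma mem_cylinder_iff {n : ℕ} {W : Fin n → Fin 2} {x : FullShift} :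
    x ∈ cylinder W ↔ wordAt x n = W :=
  funext_iff.symm

lemma mem_cylinder_wordAt (x : FullShift) (n : ℕ) : x ∈ cylinder (wordAt x n) :=
  mem_cylinder_iff.2 rfl

lemma mem_cylinder_singleton {b : Fin 2} {x : FullShift} : x ∈ cylinder ![b] ↔ x 0 = b :=
  ⟨fun h => h 0, fun h i => by fin_cases i; exact h⟩

lemma continuous_wordAt (n : ℕ) : Continuous fun x : FullShift => wordAt x n :=
  continuous_pi fun _ => continuous_apply _

lemma cylinder_eq_preimage {n : ℕ} (W : Fin n → Fin 2) :
    cylinder W = (fun x => wordAt x n) ⁻¹' {W} :=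
  ext fun _ => mem_cylinder_iff

lemma isClosed_cylinder {n : ℕ} (W : Fin n → Fin 2) : IsClosed (cylinder W) :=
  cylinder_eq_preimage W ▸ isClosed_singleton.preimage (continuous_wordAt n)

lemma measurableSet_cylinder {n : ℕ} (W : Fin n → Fin 2) : MeasurableSet (cylinder W) :=
  (isClosed_cylinder W).measurableSet

lemma pairwiseDisjoint_cylinder {n : ℕ} (s : Set (Fin n → Fin 2)) :
    s.PairwiseDisjoint cylinder := fun _ _ _ _ hUV =>
  disjoint_left.2 fun _ hU hV => hUV ((mem_cylinder_iff.1 hU).symm.trans (mem_cylinder_iff.1 hV))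

lemma iUnion_cylinder (n : ℕ) : ⋃ W : Fin n → Fin 2, cylinder W = univ :=
  eq_univ_of_forall fun x => mem_iUnion.2 ⟨_, mem_cylinder_wordAt x n⟩

lemma exists_pos_measure_cylinder (μ : Measure FullShift) [NeZero μ] (n : ℕ) :
    ∃ W : Fin n → Fin 2, 0 < μ (cylinder W) := by
  by_contra! h
  apply NeZero.ne μ
  rw [← Measure.measure_univ_eq_zero, ← iUnion_cylinder n]
  exact measure_iUnion_null fun W => nonpos_iff_eq_zero.1 (h W)

lemma ones_le {n : ℕ} (W : Fin n → Fin 2) : ones W ≤ n :=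
  (Finset.card_filter_le _ _).trans_eq (Finset.card_fin n)

lemma ones_mono {n : ℕ} : Monotone (ones : (Fin n → Fin 2) → ℕ) := fun _ _ h =>
  Finset.card_le_card fun i hi => by
    simp only [Finset.mem_filter, Finset.mem_univ, true_and] at hi ⊢
    exact le_antisymm (Fin.le_last _) (hi ▸ h i)

lemma ones_strictMono {n : ℕ} : StrictMono (ones : (Fin n → Fin 2) → ℕ) := fun W U h => by
  obtain ⟨hle, i, hi⟩ := Pi.lt_def.1 h
  refine Finset.card_lt_card ⟨fun j hj => ?_, fun hsub => ?_⟩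
  · simp only [Finset.mem_filter, Finset.mem_univ, true_and] at hj ⊢
    exact le_antisymm (Fin.le_last _) (hj ▸ hle j)
  · have hUi : U i = 1 := by omega
    have := hsub (by simpa using hUi)
    simp only [Finset.mem_filter, Finset.mem_univ, true_and] at this
    omega

lemma ones_append {m n : ℕ} (W : Fin (m + n) → Fin 2) :
    ones W = ones (fun i : Fin m => W (Fin.castAdd n i)) +
      ones (fun j : Fin n => W (Fin.natAdd m j)) := by
  simp only [ones, Finset.card_filter, Fin.sum_univ_add]

lemma sum_range_ite_eq_ones (x : FullShift) (n : ℕ) (a b : ℝ) :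
    ∑ i ∈ Finset.range n, (if x i = 1 then b else a) =
      ones (wordAt x n) * b + (n - ones (wordAt x n)) * a := by
  have hones : (ones (wordAt x n) : ℝ) = ∑ i ∈ Finset.range n, if x i = 1 then 1 else 0 := by
    rw [ones, Finset.card_filter, ← Fin.sum_univ_eq_sum_range]
    push_cast
    rfl
  have hite : ∀ i : ℕ, (if x i = 1 then b else a) = a + (if x i = 1 then 1 else 0) * (b - a) :=
    fun i => by split_ifs <;> ring
  simp only [hite, hones, Finset.sum_add_distrib, ← Finset.sum_mul, Finset.sum_const,
    Finset.card_range, nsmul_eq_mul]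
  ring

lemma ones_wordAt_zero (n : ℕ) : ones (wordAt 0 n) = 0 := by
  simp [ones, wordAt]

section HereditaryClosure

variable {X : Set FullShift}

lemma subset_hereditaryClosure : X ⊆ hereditaryClosure X :=
  fun x hx => ⟨x, hx, fun _ => le_rfl⟩

lemma zero_mem_hereditaryClosure (hX : X.Nonempty) : (0 : FullShift) ∈ hereditaryClosure X :=
  let ⟨x, hx⟩ := hX
  ⟨x, hx, fun _ => Fin.zero_le _⟩

lemma Set.MapsTo.hereditaryClosure (hX : MapsTo shift X X) :
    MapsTo shift (hereditaryClosure X) (hereditaryClosure X) :=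
  fun _ ⟨x, hx, hle⟩ => ⟨shift x, hX hx, fun i => hle (i + 1)⟩

lemma continuous_qmul : Continuous Qmul :=
  continuous_pi fun i =>
    ((continuous_apply i).comp continuous_fst).mul ((continuous_apply i).comp continuous_snd)

lemma measurable_qmul : Measurable Qmul :=
  measurable_pi_lambda _ fun i =>
    ((measurable_pi_apply i).comp measurable_fst).mul ((measurable_pi_apply i).comp measurable_snd)

lemma hereditaryClosure_eq_image_qmul : hereditaryClosure X = Qmul '' (X ×ˢ univ) := by
  ext y
  constructor
  · rintro ⟨x, hx, hle⟩
    have hmul : ∀ a b : Fin 2, b ≤ a → a * b = b := by decide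
    exact ⟨(x, y), ⟨hx, trivial⟩, funext fun i => hmul _ _ (hle i)⟩
  · rintro ⟨⟨x, b⟩, ⟨hx, -⟩, rfl⟩
    exact ⟨x, hx, fun i => Fin.two_mul_le_left _ _⟩

lemma isCompact_hereditaryClosure (hX : IsClosed X) : IsCompact (hereditaryClosure X) := by
  rw [hereditaryClosure_eq_image_qmul]
  exact (hX.isCompact.prod isCompact_univ).image continuous_qmul

end HereditaryClosure

section Birkhoff

variable {α M : Type*}

lemma birkhoffSum_le_birkhoffSum [AddCommMonoid M] [PartialOrder M] [IsOrderedAddMonoid M]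
    {f : α → α} {s : Set α} (hf : MapsTo f s s) {φ ψ : α → M} (h : ∀ y ∈ s, φ y ≤ ψ y) {x : α}
    (hx : x ∈ s) (n : ℕ) : birkhoffSum f φ n x ≤ birkhoffSum f ψ n x :=
  Finset.sum_le_sum fun k _ => h _ (hf.iterate k hx)

variable [MeasurableSpace α] {μ : Measure α} {f : α → α} {φ : α → ℝ}

lemma MeasureTheory.MeasurePreserving.integrable_comp_iterate (hf : MeasurePreserving f μ μ)
    (hφ : Integrable φ μ) (k : ℕ) : Integrable (fun x => φ (f^[k] x)) μ :=
  ((hf.iterate k).integrable_comp hφ.aestronglyMeasurable).2 hφ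

lemma MeasureTheory.MeasurePreserving.integrable_birkhoffSum (hf : MeasurePreserving f μ μ)
    (hφ : Integrable φ μ) (n : ℕ) : Integrable (birkhoffSum f φ n) μ :=
  integrable_finsetSum _ fun k _ => hf.integrable_comp_iterate hφ k

lemma MeasureTheory.MeasurePreserving.integral_birkhoffSum (hf : MeasurePreserving f μ μ)
    (hφ : Integrable φ μ) (n : ℕ) : ∫ x, birkhoffSum f φ n x ∂μ = n * ∫ x, φ x ∂μ := by
  have hk : ∀ k, ∫ x, φ (f^[k] x) ∂μ = ∫ x, φ x ∂μ := fun k => by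
    conv_rhs => rw [← (hf.iterate k).map_eq]
    exact (integral_map (hf.iterate k).measurable.aemeasurable
      ((hf.iterate k).map_eq.symm ▸ hφ.aestronglyMeasurable)).symm
  simp only [birkhoffSum]
  rw [integral_finsetSum _ fun k _ => hf.integrable_comp_iterate hφ k]
  simp [hk]

lemma MeasureTheory.MeasurePreserving.integral_le_of_birkhoffSum_le [IsProbabilityMeasure μ]
    (hf : MeasurePreserving f μ μ) (hφ : Integrable φ μ) {g : ℕ → ℝ} {L : ℝ}
    (hg : Tendsto (fun n => g n / n) atTop (𝓝 L))
    (hle : ∀ n, ∀ᵐ x ∂μ, birkhoffSum f φ n x ≤ g n) : ∫ x, φ x ∂μ ≤ L := by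
  refine ge_of_tendsto hg (eventually_atTop.2 ⟨1, fun n hn => ?_⟩)
  rw [le_div_iff₀ (by positivity), mul_comm, ← hf.integral_birkhoffSum hφ]
  calc ∫ x, birkhoffSum f φ n x ∂μ ≤ ∫ _, g n ∂μ :=
        integral_mono_ae (hf.integrable_birkhoffSum hφ n) (integrable_const _) (hle n)
    _ = g n := by simp

lemma ContinuousOn.integrable_of_ae_mem [TopologicalSpace α] [OpensMeasurableSpace α] [T2Space α]
    [IsFiniteMeasure μ] {K : Set α} (hK : IsCompact K) (hφ : ContinuousOn φ K)
    (hμK : ∀ᵐ x ∂μ, x ∈ K) : Integrable φ μ := by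
  have := hφ.integrableOn_compact (μ := μ) hK
  rwa [IntegrableOn, Measure.restrict_eq_self_of_ae_mem hμK] at this

end Birkhoff

lemma birkhoff_eq_birkhoffSum (φ : FullShift → ℝ) : birkhoff φ = birkhoffSum shift φ := rfl

lemma birkhoff_ite (a b : ℝ) (n : ℕ) (x : FullShift) :
    birkhoff (fun y => if y 0 = 1 then b else a) n x =
      ones (wordAt x n) * b + (n - ones (wordAt x n)) * a := by
  simp only [birkhoff, shift_iterate_apply, zero_add]
  exact sum_range_ite_eq_ones x n a b

section CompactBounds

variable {Y : Set FullShift} {φ : FullShift → ℝ}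

lemma mem_Icc_sInf_sSup (hY : IsCompact Y) (hφ : ContinuousOn φ Y) {y : FullShift} (hy : y ∈ Y)
    {b : Fin 2} (hb : y 0 = b) :
    φ y ∈ Icc (sInf (φ '' (Y ∩ cylinder ![b]))) (sSup (φ '' (Y ∩ cylinder ![b]))) := by
  have hK := (hY.inter_right (isClosed_cylinder ![b])).image_of_continuousOn
    (hφ.mono inter_subset_left)
  have hmem := mem_image_of_mem φ
    (show y ∈ Y ∩ cylinder ![b] from ⟨hy, mem_cylinder_singleton.2 hb⟩)
  exact ⟨csInf_le hK.bddBelow hmem, le_csSup hK.bddAbove hmem⟩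

variable (hY : IsCompact Y) (hYs : MapsTo shift Y Y) (hφ : ContinuousOn φ Y)
include hY hYs hφ

lemma birkhoff_le_sSup {x : FullShift} (hx : x ∈ Y) (n : ℕ) :
    birkhoff φ n x ≤ ones (wordAt x n) * sSup (φ '' (Y ∩ cylinder ![1])) +
      (n - ones (wordAt x n)) * sSup (φ '' (Y ∩ cylinder ![0])) := by
  rw [← birkhoff_ite, birkhoff_eq_birkhoffSum, birkhoff_eq_birkhoffSum]
  refine birkhoffSum_le_birkhoffSum hYs (fun y hy => ?_) hx n
  split_ifs with h
  exacts [(mem_Icc_sInf_sSup hY hφ hy h).2,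
    (mem_Icc_sInf_sSup hY hφ hy (Fin.eq_zero_of_ne_one _ h)).2]

lemma sInf_le_birkhoff {x : FullShift} (hx : x ∈ Y) (n : ℕ) :
    ones (wordAt x n) * sInf (φ '' (Y ∩ cylinder ![1])) +
      (n - ones (wordAt x n)) * sInf (φ '' (Y ∩ cylinder ![0])) ≤ birkhoff φ n x := by
  rw [← birkhoff_ite, birkhoff_eq_birkhoffSum, birkhoff_eq_birkhoffSum]
  refine birkhoffSum_le_birkhoffSum hYs (fun y hy => ?_) hx n
  split_ifs with h
  exacts [(mem_Icc_sInf_sSup hY hφ hy h).1,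
    (mem_Icc_sInf_sSup hY hφ hy (Fin.eq_zero_of_ne_one _ h)).1]

end CompactBounds

section MaxOnes

/-- The paper's `max_{P W} #₁W` (and `0` when no word satisfies `P`). -/
noncomputable def maxOnes {n : ℕ} (P : (Fin n → Fin 2) → Prop) : ℝ :=
  sSup {m : ℝ | ∃ W, P W ∧ m = ones W}

variable {n : ℕ} {P : (Fin n → Fin 2) → Prop}

lemma le_maxOnes {W : Fin n → Fin 2} (hW : P W) : (ones W : ℝ) ≤ maxOnes P := by
  refine le_csSup ⟨n, ?_⟩ ⟨W, hW, rfl⟩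
  rintro _ ⟨U, -, rfl⟩
  exact_mod_cast ones_le U

lemma maxOnes_nonneg : 0 ≤ maxOnes P :=
  Real.sSup_nonneg <| by rintro _ ⟨W, -, rfl⟩; positivity

lemma exists_ones_eq_maxOnes (h : ∃ W, P W) : ∃ W, P W ∧ (ones W : ℝ) = maxOnes P := by
  classical
  obtain ⟨W, hW, hmax⟩ := Finset.exists_max_image (Finset.univ.filter P) ones
    (let ⟨W, hW⟩ := h; ⟨W, by simpa using hW⟩)
  simp only [Finset.mem_filter, Finset.mem_univ, true_and] at hW hmax
  have hgreatest : IsGreatest {m : ℝ | ∃ U, P U ∧ m = ones U} (ones W) := by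
    refine ⟨⟨W, hW, rfl⟩, ?_⟩
    rintro _ ⟨U, hU, rfl⟩
    exact_mod_cast hmax U hU
  exact ⟨W, hW, hgreatest.csSup_eq.symm⟩

end MaxOnes

lemma Subadditive.mul_le_of_tendsto {u : ℕ → ℝ} (hu : Subadditive u)
    (hbdd : BddBelow (range fun n => u n / n)) {D : ℝ}
    (hD : Tendsto (fun n => u n / n) atTop (𝓝 D)) (n : ℕ) : n * D ≤ u n := by
  rcases Nat.eq_zero_or_pos n with rfl | hn
  · simpa using hu 0 0
  rw [← tendsto_nhds_unique (hu.tendsto_lim hbdd) hD, ← le_div_iff₀' (by positivity)]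
  exact hu.lim_le_div hbdd hn.ne'

section Fekete

variable {ν : Measure FullShift} [NeZero ν]

lemma subadditive_maxOnes (hν : MeasurePreserving shift ν ν) :
    Subadditive fun n => maxOnes fun W : Fin n → Fin 2 => 0 < ν (cylinder W) := fun m n => by
  obtain ⟨W, hW, hWmax⟩ := exists_ones_eq_maxOnes (exists_pos_measure_cylinder ν (m + n))
  have hpre : cylinder W ⊆ cylinder fun i : Fin m => W (Fin.castAdd n i) :=
    fun x hx i => hx (Fin.castAdd n i)
  have hsuf : cylinder W ⊆ shift^[m] ⁻¹' cylinder fun j : Fin n => W (Fin.natAdd m j) :=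
    fun x hx j => by
      simpa [shift_iterate_apply, add_comm] using hx (Fin.natAdd m j)
  dsimp only
  rw [← hWmax, ones_append, Nat.cast_add]
  refine add_le_add (le_maxOnes (hW.trans_le (measure_mono hpre))) (le_maxOnes ?_)
  rw [← (hν.iterate m).measure_preimage (measurableSet_cylinder _).nullMeasurableSet]
  exact hW.trans_le (measure_mono hsuf)

lemma mul_le_maxOnes (hν : MeasurePreserving shift ν ν) {D : ℝ}
    (hD : Tendsto (fun n : ℕ => maxOnes (fun W : Fin n → Fin 2 => 0 < ν (cylinder W)) / n)
      atTop (𝓝 D)) (n : ℕ) :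
    n * D ≤ maxOnes (fun W : Fin n → Fin 2 => 0 < ν (cylinder W)) :=
  (subadditive_maxOnes hν).mul_le_of_tendsto
    ⟨0, by rintro _ ⟨n, rfl⟩; exact div_nonneg maxOnes_nonneg n.cast_nonneg⟩ hD n

end Fekete

section Frequency

variable {X : Set FullShift} {μ : Measure FullShift} [IsProbabilityMeasure μ] {D : ℝ}

lemma ones_wordAt_le_maxOnes {x : FullShift} (hx : x ∈ hereditaryClosure X) (n : ℕ) :
    (ones (wordAt x n) : ℝ) ≤ maxOnes fun W : Fin n → Fin 2 => (X ∩ cylinder W).Nonempty := by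
  obtain ⟨x', hx', hle⟩ := hx
  exact (Nat.cast_le.2 (ones_mono (fun i => hle _ : wordAt x n ≤ wordAt x' n))).trans
    (le_maxOnes ⟨x', hx', mem_cylinder_wordAt x' n⟩)

variable (hμ : MeasurePreserving shift μ μ)
  (hD : Tendsto (fun n : ℕ => maxOnes (fun W : Fin n → Fin 2 => (X ∩ cylinder W).Nonempty) / n)
    atTop (𝓝 D))
include hμ hD

lemma measure_cylinder_one_le (hX : MeasurableSet X) (hμX : μ X = 1) :
    (μ (cylinder ![1])).toReal ≤ D := by
  have hind : (cylinder ![1]).indicator 1 = fun y : FullShift => if y 0 = 1 then (1 : ℝ) else 0 :=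
    funext fun y => by by_cases h : y 0 = 1 <;> simp [h, mem_cylinder_singleton]
  have hint : Integrable (fun y : FullShift => if y 0 = 1 then (1 : ℝ) else 0) μ := by
    rw [← hind]
    exact (integrable_const 1).indicator (measurableSet_cylinder _)
  rw [← measureReal_def, ← integral_indicator_one (measurableSet_cylinder _), hind]
  refine hμ.integral_le_of_birkhoffSum_le hint hD fun n => ?_
  filter_upwards [(mem_ae_iff_prob_eq_one hX).2 hμX] with x hx
  rw [← birkhoff_eq_birkhoffSum, birkhoff_ite]
  simpa using ones_wordAt_le_maxOnes (subset_hereditaryClosure hx) n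

lemma integral_le_sSup_add {φ : FullShift → ℝ} (hX : IsClosed X) (hXs : MapsTo shift X X)
    (hμX : μ (hereditaryClosure X) = 1) (hφ : ContinuousOn φ (hereditaryClosure X))
    (h01 : sSup (φ '' (hereditaryClosure X ∩ cylinder ![0])) ≤
      sSup (φ '' (hereditaryClosure X ∩ cylinder ![1]))) :
    ∫ x, φ x ∂μ ≤ sSup (φ '' (hereditaryClosure X ∩ cylinder ![0])) +
      (sSup (φ '' (hereditaryClosure X ∩ cylinder ![1])) -
        sSup (φ '' (hereditaryClosure X ∩ cylinder ![0]))) * D := by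
  set s0 := sSup (φ '' (hereditaryClosure X ∩ cylinder ![0]))
  set s1 := sSup (φ '' (hereditaryClosure X ∩ cylinder ![1]))
  have hY := isCompact_hereditaryClosure hX
  have hae : ∀ᵐ x ∂μ, x ∈ hereditaryClosure X :=
    (mem_ae_iff_prob_eq_one hY.isClosed.measurableSet).2 hμX
  let g : ℕ → ℝ := fun n =>
    n * s0 + maxOnes (fun W : Fin n → Fin 2 => (X ∩ cylinder W).Nonempty) * (s1 - s0)
  have hg : Tendsto (fun n : ℕ => g n / n) atTop (𝓝 (s0 + D * (s1 - s0))) := by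
    refine ((hD.mul_const (s1 - s0)).const_add s0).congr' (eventually_atTop.2 ⟨1, fun n hn => ?_⟩)
    have : (n : ℝ) ≠ 0 := by positivity
    simp only [g]
    field_simp
  rw [mul_comm]
  refine hμ.integral_le_of_birkhoffSum_le (hφ.integrable_of_ae_mem hY hae) hg fun n => ?_
  filter_upwards [hae] with x hx
  have hbirk := birkhoff_le_sSup hY hXs.hereditaryClosure hφ hx n
  have hones := mul_le_mul_of_nonneg_right (ones_wordAt_le_maxOnes hx n) (sub_nonneg.2 h01)
  rw [← birkhoff_eq_birkhoffSum]
  linarith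

end Frequency

section Convolution

def upperCylinder {n : ℕ} (W : Fin n → Fin 2) : Set FullShift := {x | ∀ i : Fin n, W i ≤ x i}

variable {n : ℕ} {ν B : Measure FullShift}

lemma upperCylinder_eq_biUnion (W : Fin n → Fin 2) :
    upperCylinder W = ⋃ U ∈ Fintype.piFinset fun i => Finset.Ici (W i), cylinder U := by
  ext x
  simp only [mem_iUnion, Fintype.mem_piFinset, Finset.mem_Ici, exists_prop]
  constructor
  · exact fun hx => ⟨wordAt x n, hx, mem_cylinder_wordAt x n⟩
  · rintro ⟨U, hU, hx⟩ i
    exact (hU i).trans_eq (hx i).symm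

lemma measure_upperCylinder (μ : Measure FullShift) (W : Fin n → Fin 2) :
    μ (upperCylinder W) = ∑ U ∈ Fintype.piFinset fun i => Finset.Ici (W i), μ (cylinder U) := by
  rw [upperCylinder_eq_biUnion,
    measure_biUnion_finset (pairwiseDisjoint_cylinder _) fun U _ => measurableSet_cylinder U]

lemma measure_upperCylinder_of_maximal {W : Fin n → Fin 2}
    (hW : (ones W : ℝ) = maxOnes fun U : Fin n → Fin 2 => 0 < ν (cylinder U)) :
    ν (upperCylinder W) = ν (cylinder W) := by
  rw [measure_upperCylinder, Finset.sum_eq_single_of_mem W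
    (Fintype.mem_piFinset.2 fun i => Finset.mem_Ici.2 le_rfl)]
  intro U hU hUW
  by_contra hne
  have hlt := ones_strictMono <| lt_of_le_of_ne
    (fun i => Finset.mem_Ici.1 (Fintype.mem_piFinset.1 hU i)) (Ne.symm hUW)
  have hle := le_maxOnes (P := fun U : Fin n → Fin 2 => 0 < ν (cylinder U)) (pos_iff_ne_zero.2 hne)
  rw [← hW] at hle
  exact absurd hlt (not_lt.2 (by exact_mod_cast hle))

lemma measure_map_qmul_cylinder_le [SFinite B] (W : Fin n → Fin 2) :
    (ν.prod B).map Qmul (cylinder W) ≤ ν (upperCylinder W) * B (upperCylinder W) := by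
  rw [Measure.map_apply measurable_qmul (measurableSet_cylinder W), ← Measure.prod_prod]
  refine measure_mono fun p hp => ⟨fun i => ?_, fun i => ?_⟩
  · exact (hp i).symm.trans_le (Fin.two_mul_le_left _ _)
  · exact (hp i).symm.trans_le (Fin.two_mul_le_right _ _)

lemma mul_le_measure_map_qmul_cylinder [SFinite B] (U V : Fin n → Fin 2) :
    ν (cylinder U) * B (cylinder V) ≤ (ν.prod B).map Qmul (cylinder (U * V)) := by
  rw [Measure.map_apply measurable_qmul (measurableSet_cylinder _), ← Measure.prod_prod]
  exact measure_mono fun p ⟨hU, hV⟩ i => congrArg₂ (· * ·) (hU i) (hV i)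

lemma prod_ite_eq_pow_zeros_mul_pow_ones (q : ℝ) (W : Fin n → Fin 2) :
    ∏ i, (if W i = 1 then 1 - q else q) = q ^ zeros W * (1 - q) ^ ones W := by
  rw [Finset.prod_ite, Finset.prod_const, Finset.prod_const, mul_comm]
  congr 2
  exact congrArg Finset.card (Finset.filter_congr fun i _ => by omega)

variable {q : ℝ}
  (hB : ∀ (n : ℕ) (W : Fin n → Fin 2), (B (cylinder W)).toReal = q ^ zeros W * (1 - q) ^ ones W)
include hB

lemma bernoulli_cylinder_pos (hq0 : 0 < q) (hq1 : q < 1) (W : Fin n → Fin 2) :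
    0 < B (cylinder W) := by
  have h1q : 0 < 1 - q := sub_pos.2 hq1
  have : 0 < (B (cylinder W)).toReal := hB n W ▸ by positivity
  exact (ENNReal.toReal_pos_iff.1 this).1

lemma bernoulli_upperCylinder [IsFiniteMeasure B] (W : Fin n → Fin 2) :
    (B (upperCylinder W)).toReal = (1 - q) ^ ones W := by
  have hIci : ∀ a : Fin 2, ∑ u ∈ Finset.Ici a, (if u = 1 then 1 - q else q) =
      if a = 1 then 1 - q else 1 := by
    intro a
    fin_cases a
    · simp [show Finset.Ici (0 : Fin 2) = {0, 1} by decide]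
    · simp [show Finset.Ici (1 : Fin 2) = {1} by decide]
  rw [measure_upperCylinder, ENNReal.toReal_sum fun _ _ => measure_ne_top _ _]
  simp_rw [hB, ← prod_ite_eq_pow_zeros_mul_pow_ones]
  rw [← Finset.prod_univ_sum (fun i => Finset.Ici (W i)) fun _ u => if u = 1 then 1 - q else q,
    Finset.prod_congr rfl fun i _ => hIci (W i), Finset.prod_ite,
    Finset.prod_const, Finset.prod_const_one, mul_one]
  rfl

lemma measure_map_qmul_cylinder_mul_pos [SFinite B] (hq0 : 0 < q) (hq1 : q < 1)
    {U : Fin n → Fin 2} (hU : 0 < ν (cylinder U)) (V : Fin n → Fin 2) :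
    0 < (ν.prod B).map Qmul (cylinder (U * V)) :=
  (ENNReal.mul_pos hU.ne' (bernoulli_cylinder_pos hB hq0 hq1 V).ne').trans_le
    (mul_le_measure_map_qmul_cylinder U V)

lemma le_measure_cylinder_of_maximal [IsFiniteMeasure ν] [IsFiniteMeasure B] (hq1 : q < 1)
    {W : Fin n → Fin 2} (hW : (ones W : ℝ) = maxOnes fun U : Fin n → Fin 2 => 0 < ν (cylinder U))
    {ε : ℝ} (h : ε * (1 - q) ^ ones W ≤ ((ν.prod B).map Qmul (cylinder W)).toReal) :
    ε ≤ (ν (cylinder W)).toReal := by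
  have hle := ENNReal.toReal_mono (ENNReal.mul_ne_top (measure_ne_top _ _) (measure_ne_top _ _))
    (measure_map_qmul_cylinder_le (ν := ν) (B := B) W)
  rw [ENNReal.toReal_mul, measure_upperCylinder_of_maximal hW, bernoulli_upperCylinder hB] at hle
  exact le_of_mul_le_mul_right (h.trans hle) (pow_pos (sub_pos.2 hq1) _)

end Convolution

section Atoms

def agreeFrom (a : ℤ) (y : FullShift) : Set FullShift := {z | ∀ j, a ≤ j → z j = y j}

lemma measurableSet_agreeFrom (a : ℤ) (y : FullShift) : MeasurableSet (agreeFrom a y) := by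
  unfold agreeFrom
  measurability

lemma agreeFrom_zero_eq_iInter (x : FullShift) :
    agreeFrom 0 x = ⋂ n : ℕ, cylinder (wordAt x n) := by
  ext z
  simp only [mem_iInter]
  constructor
  · intro h n i
    exact h i (by positivity)
  · intro h j hj
    lift j to ℕ using hj
    exact h (j + 1) ⟨j, by omega⟩

lemma antitone_cylinder_wordAt (x : FullShift) : Antitone fun n => cylinder (wordAt x n) :=
  antitone_nat_of_succ_le fun _ _ hy i => hy (Fin.castSucc i)

lemma preimage_shift_iterate_agreeFrom {k : ℕ} {y : FullShift} (hy : shift^[k] y = y) (a : ℤ) :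
    shift^[k] ⁻¹' agreeFrom a y = agreeFrom (a + k) y := by
  have hyk : ∀ j, y (j + k) = y j := fun j => by rw [← shift_iterate_apply k y j, hy]
  ext z
  simp only [agreeFrom, mem_preimage, mem_ofPred_eq, shift_iterate_apply]
  constructor
  · intro h j hj
    have := h (j - k) (by linarith)
    rwa [sub_add_cancel, ← hyk, sub_add_cancel] at this
  · intro h j hj
    rw [h (j + k) (by linarith), hyk]

lemma exists_forall_le_measure_cylinder_wordAt {m : Measure FullShift} {ε : ℝ≥0∞} (hε : ε ≠ 0)
    (h : ∀ n, ∃ W : Fin n → Fin 2, ε ≤ m (cylinder W)) :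
    ∃ x, ∀ n, ε ≤ m (cylinder (wordAt x n)) := by
  let C : ℕ → Set FullShift := fun n => {x | ε ≤ m (cylinder (wordAt x n))}
  have hclosed : ∀ n, IsClosed (C n) := fun n =>
    (isClosed_discrete {W | ε ≤ m (cylinder W)}).preimage (continuous_wordAt n)
  have hC : (⋂ n, C n).Nonempty := by
    refine IsCompact.nonempty_iInter_of_sequence_nonempty_isCompact_isClosed C
      (fun n x hx => hx.trans (measure_mono (antitone_cylinder_wordAt x n.le_succ)))
      (fun n => ?_) (hclosed 0).isCompact hclosed
    obtain ⟨W, hW⟩ := h n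
    obtain ⟨x, hx⟩ := nonempty_of_measure_ne_zero (hε.bot_lt.trans_le hW).ne'
    exact ⟨x, show ε ≤ _ from (mem_cylinder_iff.1 hx).symm ▸ hW⟩
  obtain ⟨x, hx⟩ := hC
  exact ⟨x, fun n => mem_iInter.1 hx n⟩

variable {m : Measure FullShift} [IsFiniteMeasure m]

lemma le_measure_agreeFrom_zero {x : FullShift} {ε : ℝ≥0∞}
    (h : ∀ n, ε ≤ m (cylinder (wordAt x n))) : ε ≤ m (agreeFrom 0 x) := by
  rw [agreeFrom_zero_eq_iInter]
  exact ge_of_tendsto (tendsto_measure_iInter_atTop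
    (fun n => (measurableSet_cylinder _).nullMeasurableSet) (antitone_cylinder_wordAt x)
    ⟨0, measure_ne_top _ _⟩) (Eventually.of_forall h)

/-- For a periodic point `y`, the sets `agreeFrom (-k p) y` all have the mass of
`agreeFrom 0 y` by invariance, and they shrink to `{y}`. -/
lemma measure_agreeFrom_zero_le_singleton (hm : MeasurePreserving shift m m) {p : ℕ} (hp : 0 < p)
    {y : FullShift} (hy : IsPeriodicPt shift p y) : m (agreeFrom 0 y) ≤ m {y} := by
  let s : ℕ → Set FullShift := fun k => agreeFrom (-(k * p : ℕ)) y
  have hs : m ∘ s = fun _ => m (agreeFrom 0 y) := funext fun k => by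
    rw [comp_apply, ← (hm.iterate (k * p)).measure_preimage
      (measurableSet_agreeFrom _ _).nullMeasurableSet,
      preimage_shift_iterate_agreeFrom (hy.const_mul k), neg_add_cancel]
  have hanti : Antitone s := fun k l hkl z hz j hj =>
    hz j (le_trans (neg_le_neg (by exact_mod_cast Nat.mul_le_mul_right p hkl)) hj)
  have hsub : ⋂ k, s k ⊆ {y} := fun z hz => funext fun j =>
    mem_iInter.1 hz j.natAbs j (by push_cast; nlinarith [abs_nonneg j, neg_abs_le j])
  have hlim := tendsto_measure_iInter_atTop (μ := m)
    (fun k => (measurableSet_agreeFrom _ y).nullMeasurableSet) hanti ⟨0, measure_ne_top _ _⟩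
  rw [hs] at hlim
  exact (tendsto_nhds_unique tendsto_const_nhds hlim).trans_le (measure_mono hsub)

/-- Poincaré recurrence makes the future of `x` periodic; extend it periodically to the past. -/
lemma exists_isPeriodicPt_agreeFrom_eq (hm : MeasurePreserving shift m m) {x : FullShift}
    (hx : m (agreeFrom 0 x) ≠ 0) :
    ∃ p, 0 < p ∧ ∃ y, IsPeriodicPt shift p y ∧ agreeFrom 0 y = agreeFrom 0 x := by
  obtain ⟨w, hw, p, hp, hpw⟩ :=
    hm.exists_mem_iterate_mem (measurableSet_agreeFrom 0 x).nullMeasurableSet hx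
  have hper : Periodic (fun i : ℕ => x i) p := fun i => by
    have := hpw i (by positivity)
    rw [shift_iterate_apply, hw _ (by positivity)] at this
    simpa using this
  refine ⟨p, Nat.pos_of_ne_zero hp, fun j => x ((j % p).toNat), ?_, ?_⟩
  · funext j
    rw [shift_iterate_apply, Int.add_emod_right]
  · ext z
    refine forall_congr' fun j => imp_congr_right fun hj => ?_
    lift j to ℕ using hj
    dsimp only
    rw [← Int.natCast_mod, Int.toNat_natCast]
    exact iff_of_eq (congrArg _ (hper.map_mod_nat j))

theorem exists_le_measure_singleton (hm : MeasurePreserving shift m m) {ε : ℝ≥0∞} (hε : ε ≠ 0)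
    (h : ∀ n, ∃ W : Fin n → Fin 2, ε ≤ m (cylinder W)) : ∃ y, ε ≤ m {y} := by
  obtain ⟨x, hx⟩ := exists_forall_le_measure_cylinder_wordAt hε h
  have hεx := le_measure_agreeFrom_zero hx
  obtain ⟨p, hp, y, hy, hyx⟩ := exists_isPeriodicPt_agreeFrom_eq hm (hε.bot_lt.trans_le hεx).ne'
  refine ⟨y, hεx.trans ?_⟩
  rw [← hyx]
  exact measure_agreeFrom_zero_le_singleton hm hp hy

end Atoms

lemma measure_singleton_zero_eq_one_of_measure_cylinder_one {ν : Measure FullShift}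
    [IsProbabilityMeasure ν] (hν : MeasurePreserving shift ν ν) (h : ν (cylinder ![1]) = 0) :
    ν {0} = 1 := by
  have hcompl : ν (agreeFrom 0 0)ᶜ = 0 := by
    refine measure_mono_null (t := ⋃ k : ℕ, shift^[k] ⁻¹' cylinder ![1]) (fun z hz => ?_)
      (measure_iUnion_null fun k => ?_)
    · simp only [agreeFrom, mem_compl_iff, mem_ofPred_eq, not_forall] at hz
      obtain ⟨j, hj, hzj⟩ := hz
      lift j to ℕ using hj
      refine mem_iUnion.2 ⟨j, mem_cylinder_singleton.2 ?_⟩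
      have hzj' : z j ≠ 0 := hzj
      rw [shift_iterate_apply, zero_add]
      omega
    · rw [(hν.iterate k).measure_preimage (measurableSet_cylinder _).nullMeasurableSet, h]
  have hfull := (prob_compl_eq_zero_iff (measurableSet_agreeFrom 0 0)).1 hcompl
  exact le_antisymm prob_le_one (hfull ▸ measure_agreeFrom_zero_le_singleton hν one_pos rfl)

section Gibbs

variable {Y : Set FullShift} {φ : FullShift → ℝ} {P : ℝ}

lemma IsGibbs.exists_lower_bound {κ : Measure FullShift} (h : IsGibbs Y κ φ P) :
    ∃ ε > 0, ∀ n x, x ∈ Y → 0 < κ (cylinder (wordAt x n)) →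
      ε * 2 ^ (birkhoff φ n x - n * P) ≤ (κ (cylinder (wordAt x n))).toReal := by
  obtain ⟨c, hc, h⟩ := h
  exact ⟨c⁻¹, inv_pos.2 hc, fun n x hx hpos => (le_div_iff₀ (by positivity)).1 (h n x hx hpos).1⟩

variable {ν B : Measure FullShift} [IsProbabilityMeasure ν] [IsProbabilityMeasure B] {q : ℝ}
  (hB : ∀ (n : ℕ) (W : Fin n → Fin 2), (B (cylinder W)).toReal = q ^ zeros W * (1 - q) ^ ones W)
  (hq0 : 0 < q) (hq1 : q < 1) (hν : MeasurePreserving shift ν ν)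
include hB hq0 hq1 hν

theorem IsGibbs.measure_singleton_zero_eq_one (hG : IsGibbs Y ((ν.prod B).map Qmul) φ P)
    (hκ : Ergodic shift ((ν.prod B).map Qmul)) (h0 : 0 ∈ Y)
    (hφ : ∀ n : ℕ, n * P ≤ birkhoff φ n 0) : ν {0} = 1 := by
  obtain ⟨ε, hε, hlow⟩ := hG.exists_lower_bound
  have hcyl : ∀ n, ENNReal.ofReal ε ≤ (ν.prod B).map Qmul (cylinder (wordAt 0 n)) := by
    intro n
    obtain ⟨U, hU⟩ := exists_pos_measure_cylinder ν n
    have hpos := measure_map_qmul_cylinder_mul_pos hB hq0 hq1 hU 0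
    rw [mul_zero] at hpos
    rw [ENNReal.ofReal_le_iff_le_toReal (measure_ne_top _ _)]
    exact (le_mul_of_one_le_right hε.le (Real.one_le_rpow one_le_two (sub_nonneg.2 (hφ n)))).trans
      (hlow n 0 h0 hpos)
  have hatom : (ν.prod B).map Qmul {0} ≠ 0 :=
    ((ENNReal.ofReal_pos.2 hε).trans_le ((le_measure_agreeFrom_zero hcyl).trans
      (measure_agreeFrom_zero_le_singleton hκ.toMeasurePreserving one_pos rfl))).ne'
  have hfix : shift ⁻¹' {0} = {0} := by
    ext z
    refine ⟨fun hz => funext fun j => by simpa [shift] using congrFun hz (j - 1), ?_⟩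
    rintro rfl
    rfl
  have hκ1 : (ν.prod B).map Qmul (cylinder ![1]) = 0 := by
    refine measure_mono_null (t := ({0} : Set FullShift)ᶜ) (fun z hz hz0 => ?_)
      ((hκ.measure_self_or_compl_eq_zero (measurableSet_singleton 0) hfix).resolve_left hatom)
    rw [mem_cylinder_singleton, mem_singleton_iff.1 hz0] at hz
    exact absurd hz (by decide)
  have hν1 : ν (cylinder ![1]) * B (cylinder ![1]) = 0 := by
    simpa [show (![1] * ![1] : Fin 1 → Fin 2) = ![1] by decide, hκ1] using
      mul_le_measure_map_qmul_cylinder (ν := ν) (B := B) ![1] ![1]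
  exact measure_singleton_zero_eq_one_of_measure_cylinder_one hν
    ((mul_eq_zero.1 hν1).resolve_right (bernoulli_cylinder_pos hB hq0 hq1 _).ne')

theorem IsGibbs.exists_measure_singleton_pos (hG : IsGibbs Y ((ν.prod B).map Qmul) φ P)
    {X : Set FullShift} (hXY : X ⊆ Y) (hX : ∀ᵐ x ∂ν, x ∈ X)
    (hφ : ∀ (n : ℕ), ∀ x ∈ X,
      (ones (wordAt x n) : ℝ) = maxOnes (fun W : Fin n → Fin 2 => 0 < ν (cylinder W)) →
        n * P + ones (wordAt x n) * Real.logb 2 (1 - q) ≤ birkhoff φ n x) :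
    ∃ y, 0 < ν {y} := by
  obtain ⟨ε, hε, hlow⟩ := hG.exists_lower_bound
  have hbig : ∀ n, ∃ W : Fin n → Fin 2, ENNReal.ofReal ε ≤ ν (cylinder W) := by
    intro n
    obtain ⟨W, hWpos, hW⟩ := exists_ones_eq_maxOnes (exists_pos_measure_cylinder ν n)
    obtain ⟨x, hxW, hxX⟩ := nonempty_of_measure_ne_zero
      ((measure_inter_conull (mem_ae_iff.1 hX)).trans_ne hWpos.ne')
    rw [mem_cylinder_iff] at hxW
    subst hxW
    refine ⟨wordAt x n, (ENNReal.ofReal_le_iff_le_toReal (measure_ne_top _ _)).2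
      (le_measure_cylinder_of_maximal hB hq1 hW ?_)⟩
    have hpos := measure_map_qmul_cylinder_mul_pos hB hq0 hq1 hWpos 1
    rw [mul_one] at hpos
    refine le_trans ?_ (hlow n x (hXY hxX) hpos)
    rw [← Real.rpow_logb two_pos (by norm_num) (sub_pos.2 hq1), ← Real.rpow_mul_natCast two_pos.le]
    gcongr
    · exact one_le_two
    · linarith [hφ n x hxX hW]
  obtain ⟨y, hy⟩ := exists_le_measure_singleton hν (ENNReal.ofReal_pos.2 hε).ne' hbig
  exact ⟨y, (ENNReal.ofReal_pos.2 hε).trans_le hy⟩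

end Gibbs

open Classical in
theorem stmt16_general (X : Set FullShift) (hcl : IsClosed X) (hne : X.Nonempty)
    (hinv : shift '' X = X)
    (ν B : Measure FullShift) [IsProbabilityMeasure ν] [IsProbabilityMeasure B]
    (hνerg : Ergodic shift ν) (hνX : ν X = 1)
    (hatomless : ∀ x : FullShift, ν {x} = 0)
    (q : ℝ) (hq0 : 0 < q) (hq1 : q < 1)
    (hB : ∀ (n : ℕ) (W : Fin n → Fin 2),
      (B (cylinder W)).toReal = q ^ zeros W * (1 - q) ^ ones W)
    (κ : Measure FullShift) (hκ : κ = (ν.prod B).map Qmul)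
    (hκerg : Ergodic shift κ)
    (φ : FullShift → ℝ) (hφ : ContinuousOn φ (hereditaryClosure X))
    (d D Dν dφ V0 V1 P : ℝ)
    -- d = sup_{μ ∈ M(X,S)} μ([1])
    (hd : IsLUB {r : ℝ | ∃ μ : Measure FullShift, IsProbabilityMeasure μ ∧
      μ.map shift = μ ∧ μ X = 1 ∧
      r = (μ (cylinder (![1] : Fin 1 → Fin 2))).toReal} d)
    -- D = lim (1/n) max_{W ∈ L_n(X)} #₁W
    (hD : Tendsto (fun n : ℕ =>
        sSup {m : ℝ | ∃ Wd : Fin n → Fin 2, (X ∩ cylinder Wd).Nonempty ∧ m = ones Wd} / n)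
      atTop (nhds D))
    -- D_ν = lim (1/n) max_{W ∈ L_n(X), ν(W) > 0} #₁W
    (hDν : Tendsto (fun n : ℕ =>
        sSup {m : ℝ | ∃ Wd : Fin n → Fin 2, 0 < ν (cylinder Wd) ∧ m = ones Wd} / n)
      atTop (nhds Dν))
    (hDνD : Dν = D)
    -- d^φ = sup over ergodic invariant measures of ∫ φ dμ
    (hdφ : IsLUB {r : ℝ | ∃ μ : Measure FullShift, IsProbabilityMeasure μ ∧
      Ergodic shift μ ∧ μ (hereditaryClosure X) = 1 ∧ r = ∫ x, φ x ∂μ} dφ)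
    (hV0 : V0 = sSup (φ '' (hereditaryClosure X ∩ cylinder (![0] : Fin 1 → Fin 2))) -
      sInf (φ '' (hereditaryClosure X ∩ cylinder (![0] : Fin 1 → Fin 2))))
    (hV1 : V1 = sSup (φ '' (hereditaryClosure X ∩ cylinder (![1] : Fin 1 → Fin 2))) -
      sInf (φ '' (hereditaryClosure X ∩ cylinder (![1] : Fin 1 → Fin 2))))
    (hyp1 : P ≤ (V0 - Real.logb 2 (1 - q) - V1) * d + dφ - V0)
    (hyp2 : sSup (φ '' (hereditaryClosure X ∩ cylinder (![0] : Fin 1 → Fin 2))) ≤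
      sSup (φ '' (hereditaryClosure X ∩ cylinder (![1] : Fin 1 → Fin 2))))
    (hyp3 : V1 ≤ V0 - Real.logb 2 (1 - q)) :
    ¬ IsGibbs (hereditaryClosure X) κ φ P := by
  subst hκ
  intro hG
  set s0 := sSup (φ '' (hereditaryClosure X ∩ cylinder ![0]))
  set s1 := sSup (φ '' (hereditaryClosure X ∩ cylinder ![1]))
  set L := Real.logb 2 (1 - q)
  have hXs : MapsTo shift X X := mapsTo_iff_image_subset.2 hinv.subset
  have hν := hνerg.toMeasurePreserving
  have hdD : d ≤ D := hd.2 <| by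
    rintro _ ⟨μ, _, hμ, hμX, rfl⟩
    exact measure_cylinder_one_le ⟨measurable_shift, hμ⟩ hD hcl.measurableSet hμX
  have hdφD : dφ ≤ s0 + (s1 - s0) * D := hdφ.2 <| by
    rintro _ ⟨μ, _, hμ, hμY, rfl⟩
    exact integral_le_sSup_add hμ.toMeasurePreserving hD hcl hXs hμY hφ hyp2
  have hP : P ≤ s0 - V0 + D * ((s1 - V1) - (s0 - V0) - L) := by
    linarith [mul_le_mul_of_nonneg_left hdD (by linarith : 0 ≤ V0 - L - V1)]
  have hlow := @sInf_le_birkhoff _ _ (isCompact_hereditaryClosure hcl) hXs.hereditaryClosure hφ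
  rcases le_or_gt 0 ((s1 - V1) - (s0 - V0) - L) with hΔ | hΔ
  · obtain ⟨y, hy⟩ := hG.exists_measure_singleton_pos hB hq0 hq1 hν subset_hereditaryClosure
      ((mem_ae_iff_prob_eq_one hcl.measurableSet).2 hνX) fun n x hx hmax => by
        have hnD := hmax ▸ mul_le_maxOnes hν (hDνD ▸ hDν) n
        nlinarith [hlow (subset_hereditaryClosure hx) n,
          mul_le_mul_of_nonneg_left hP n.cast_nonneg, mul_le_mul_of_nonneg_right hnD hΔ]
    exact hy.ne' (hatomless y)
  · have hD0 : 0 ≤ D := ge_of_tendsto' hD fun n => div_nonneg maxOnes_nonneg n.cast_nonneg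
    have h0 := zero_mem_hereditaryClosure hne
    have hν0 := hG.measure_singleton_zero_eq_one hB hq0 hq1 hν hκerg h0 fun n => by
      have hbirk := hlow h0 n
      rw [ones_wordAt_zero] at hbirk
      nlinarith [mul_le_mul_of_nonneg_left hP n.cast_nonneg,
        mul_nonpos_of_nonneg_of_nonpos hD0 hΔ.le]
    simp [hatomless] at hν0

open Classical in
theorem stmt16 (X : Set FullShift) (hcl : IsClosed X) (hne : X.Nonempty)
    (hinv : shift '' X = X)
    (ν B : Measure FullShift) [IsProbabilityMeasure ν] [IsProbabilityMeasure B]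
    (hνerg : Ergodic shift ν) (hνX : ν X = 1)
    (hatomless : ∀ x : FullShift, ν {x} = 0)
    (q : ℝ) (hq0 : 0 < q) (hq1 : q < 1)
    (hB : ∀ (n : ℕ) (W : Fin n → Fin 2),
      (B (cylinder W)).toReal = q ^ zeros W * (1 - q) ^ ones W)
    (κ : Measure FullShift) (hκ : κ = (ν.prod B).map Qmul)
    (hκerg : Ergodic shift κ) (hκX : κ (hereditaryClosure X) = 1)
    (φ : FullShift → ℝ) (hφ : ContinuousOn φ (hereditaryClosure X))
    (d D Dν Dφ Dφκ dφ V0 V1 P : ℝ)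
    -- d = sup_{μ ∈ M(X,S)} μ([1])
    (hd : IsLUB {r : ℝ | ∃ μ : Measure FullShift, IsProbabilityMeasure μ ∧
      μ.map shift = μ ∧ μ X = 1 ∧
      r = (μ (cylinder (![1] : Fin 1 → Fin 2))).toReal} d)
    -- D = lim (1/n) max_{W ∈ L_n(X)} #₁W
    (hD : Tendsto (fun n : ℕ =>
        sSup {m : ℝ | ∃ Wd : Fin n → Fin 2, (X ∩ cylinder Wd).Nonempty ∧ m = ones Wd} / n)
      atTop (nhds D))
    -- D_ν = lim (1/n) max_{W ∈ L_n(X), ν(W) > 0} #₁W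
    (hDν : Tendsto (fun n : ℕ =>
        sSup {m : ℝ | ∃ Wd : Fin n → Fin 2, 0 < ν (cylinder Wd) ∧ m = ones Wd} / n)
      atTop (nhds Dν))
    (hDνD : Dν = D)
    -- D^φ = lim (1/n) sup_{x ∈ X̃} Σ_{i<n} φ(Sⁱx)
    (hDφ : Tendsto (fun n : ℕ => sSup ((birkhoff φ n) '' hereditaryClosure X) / n)
      atTop (nhds Dφ))
    -- D^φ_κ = lim (1/n) max_{W, κ(W)>0} sup_{x ∈ W} Σ_{i<n} φ(Sⁱx)
    (hDφκ : Tendsto (fun n : ℕ =>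
        sSup ((birkhoff φ n) ''
          {x ∈ hereditaryClosure X | 0 < κ (cylinder (wordAt x n))}) / n)
      atTop (nhds Dφκ))
    (hDφκDφ : Dφκ = Dφ)
    -- d^φ = sup over ergodic invariant measures of ∫ φ dμ
    (hdφ : IsLUB {r : ℝ | ∃ μ : Measure FullShift, IsProbabilityMeasure μ ∧
      Ergodic shift μ ∧ μ (hereditaryClosure X) = 1 ∧ r = ∫ x, φ x ∂μ} dφ)
    (hV0 : V0 = sSup (φ '' (hereditaryClosure X ∩ cylinder (![0] : Fin 1 → Fin 2))) -
      sInf (φ '' (hereditaryClosure X ∩ cylinder (![0] : Fin 1 → Fin 2))))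
    (hV1 : V1 = sSup (φ '' (hereditaryClosure X ∩ cylinder (![1] : Fin 1 → Fin 2))) -
      sInf (φ '' (hereditaryClosure X ∩ cylinder (![1] : Fin 1 → Fin 2))))
    -- P = topological pressure of φ on X̃
    (hP : Tendsto (fun n : ℕ => Real.logb 2 (Zn (hereditaryClosure X) φ n) / n)
      atTop (nhds P))
    (hyp1 : P ≤ (V0 - Real.logb 2 (1 - q) - V1) * d + dφ - V0)
    (hyp2 : sSup (φ '' (hereditaryClosure X ∩ cylinder (![0] : Fin 1 → Fin 2))) ≤
      sSup (φ '' (hereditaryClosure X ∩ cylinder (![1] : Fin 1 → Fin 2))))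
    (hyp3 : V1 ≤ V0 - Real.logb 2 (1 - q)) :
    ¬ IsGibbs (hereditaryClosure X) κ φ P :=
  stmt16_general X hcl hne hinv ν B hνerg hνX hatomless q hq0 hq1 hB κ hκ hκerg φ hφ d D Dν dφ V0 V1
    P hd hD hDν hDνD hdφ hV0 hV1 hyp1 hyp2 hyp3
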